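/- arXiv:2208.08522 — 2 statements merged into one kernel-verified Lean document; each statement's English description precedes it below -/
import Mathlib

section
/- Let G be a directed Eulerian graph without parallel edges or self-loops that contains a node v with d(v) ≥ 3 or a node v with d(v) = 2 that is not a cut node of U(G). Then G has at least two distinct Eulerian circuits (not cyclic rotations of each other). -/
/-- The underlying undirected simple graph of a directed graph `E` (no self-loops). -/
def underlyingUG {V : Type*} (E : V → V → Prop) : SimpleGraph V where
  Adj a b := a ≠ b ∧ (E a b ∨ E b a)
  symm := ⟨fun a b h => ⟨h.1.symm, h.2.symm⟩⟩
  loopless := ⟨fun a h => h.1 rfl⟩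

/-- Out-degree of `v`: number of out-neighbors. -/
noncomputable def outdeg {V : Type*} (E : V → V → Prop) (v : V) : ℕ := Set.ncard {w | E v w}

/-- In-degree of `v`: number of in-neighbors. -/
noncomputable def indeg {V : Type*} (E : V → V → Prop) (v : V) : ℕ := Set.ncard {u | E u v}

/-- The cyclic sequence of consecutive pairs of a circuit given as a vertex list. -/
def cyclicPairs {V : Type*} (c : List V) : List (V × V) := c.zip (c.rotate 1)

/-- `c` is an Eulerian circuit: a nonempty closed walk using every edge exactly once. -/
def IsEulerianCircuit {V : Type*} (E : V → V → Prop) (c : List V) : Prop :=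
  c ≠ [] ∧ (cyclicPairs c).Nodup ∧ ∀ p : V × V, p ∈ cyclicPairs c ↔ E p.1 p.2

/-- The walk `q` appears (cyclically, as consecutive edges) in the circuit `c`. -/
def Appears {V : Type*} (q c : List V) : Prop :=
  ∃ k, (q.zip q.tail) <:+: cyclicPairs (c.rotate k)

/-- `v` is a cut node of the connected undirected graph `H`. -/
def IsCutNode {V : Type*} (H : SimpleGraph V) (v : V) : Prop :=
  ¬ (H.induce {u | u ≠ v}).Connected

/-- The underlying undirected graph with node `v` (and incident edges) removed. -/
def delNode {V : Type*} (E : V → V → Prop) (v : V) := (underlyingUG E).induce {u | u ≠ v}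

/-! Rotating an Eulerian circuit rotates its cyclic list of edges, which has no repetitions, so a
rotation preserves the edge that follows any given edge. If the circuit visits `v`
three times, it splits at `v` into three closed walks, and traversing the last two in the opposite
order gives a new Eulerian circuit. If it visits `v` exactly twice, it splits into two closed walks
through `v`; these share a vertex `u ≠ v`, since every edge of `U(G) - v` lies in one of them and
`U(G) - v` is connected, and exchanging the two `u`-`v` segments gives a new Eulerian circuit. In
both cases the edge following the last edge of the first segment changes, so the new circuit is
not a rotation of the old one. -/

open List

section CyclicPairs

variable {α : Type*}

def walkPairs (l : List α) : List (α × α) := l.zip l.tail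

theorem walkPairs_append_cons (A : List α) (b : α) (B : List α) :
    walkPairs (A ++ b :: B) = walkPairs (A ++ [b]) ++ walkPairs (b :: B) := by
  induction A with
  | nil => rfl
  | cons a A ih =>
    cases A with
    | nil => rfl
    | cons a' A' => exact congrArg ((a, a') :: ·) ih

theorem mem_of_mem_walkPairs {l : List α} {x y : α} (h : (x, y) ∈ walkPairs l) :
    x ∈ l ∧ y ∈ l :=
  ⟨(of_mem_zip h).1, mem_of_mem_tail (of_mem_zip h).2⟩

theorem walkPairs_cons_append_singleton_ne_nil (x y : α) (A : List α) :
    walkPairs (x :: A ++ [y]) ≠ [] := by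
  cases A <;> simp [walkPairs]

theorem cyclicPairs_cons (x : α) (l : List α) :
    cyclicPairs (x :: l) = walkPairs (x :: l ++ [x]) := by
  simp only [cyclicPairs, walkPairs, rotate_cons_succ, rotate_zero, cons_append, tail_cons]
  conv_rhs => rw [← cons_append, ← append_nil (l ++ [x]), zip_append (by simp)]
  simp

theorem cyclicPairs_cons_append_cons (x y : α) (A B : List α) :
    cyclicPairs (x :: A ++ y :: B) = walkPairs (x :: A ++ [y]) ++ walkPairs (y :: B ++ [x]) := by
  rw [cons_append, cyclicPairs_cons, ← cons_append,
    show x :: A ++ y :: B ++ [x] = x :: A ++ y :: (B ++ [x]) by simp, walkPairs_append_cons]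
  rfl

theorem cyclicPairs_cons_append_cons_append_cons (x y z : α) (A B D : List α) :
    cyclicPairs (x :: A ++ y :: B ++ z :: D) =
      walkPairs (x :: A ++ [y]) ++ walkPairs (y :: B ++ [z]) ++ walkPairs (z :: D ++ [x]) := by
  rw [show x :: A ++ y :: B ++ z :: D = x :: A ++ y :: (B ++ z :: D) by simp,
    cyclicPairs_cons_append_cons, append_assoc,
    show y :: (B ++ z :: D) ++ [x] = y :: B ++ z :: (D ++ [x]) by simp,
    walkPairs_append_cons (y :: B) z]
  rfl

theorem cyclicPairs_cons_append_cons_append_cons_append_cons (x y z w : α) (A B C D : List α) :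
    cyclicPairs (x :: A ++ y :: B ++ z :: C ++ w :: D) =
      walkPairs (x :: A ++ [y]) ++ walkPairs (y :: B ++ [z]) ++ walkPairs (z :: C ++ [w]) ++
        walkPairs (w :: D ++ [x]) := by
  rw [show x :: A ++ y :: B ++ z :: C ++ w :: D = x :: A ++ y :: B ++ z :: (C ++ w :: D) by simp,
    cyclicPairs_cons_append_cons_append_cons, append_assoc _ _ (walkPairs _),
    show z :: (C ++ w :: D) ++ [x] = z :: C ++ w :: (D ++ [x]) by simp,
    walkPairs_append_cons (z :: C) w]
  simp only [append_assoc, cons_append]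

theorem cyclicPairs_rotate (l : List α) (n : ℕ) :
    cyclicPairs (l.rotate n) = (cyclicPairs l).rotate n := by
  rw [cyclicPairs, cyclicPairs, zip, zipWith_rotate_distrib _ _ _ _ (length_rotate ..).symm,
    rotate_rotate, rotate_rotate, Nat.add_comm]

theorem mem_cyclicPairs_append_cons_cons (A B : List α) (e f : α) :
    (e, f) ∈ cyclicPairs (A ++ e :: f :: B) := by
  rw [← mem_rotate (n := A.length), ← cyclicPairs_rotate, rotate_append_length_eq]
  simp [cyclicPairs]

theorem List.Nodup.eq_of_mem_cyclicPairs {l : List α} (hl : l.Nodup) {e f g : α}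
    (hf : (e, f) ∈ cyclicPairs l) (hg : (e, g) ∈ cyclicPairs l) : f = g := by
  have hfst : (cyclicPairs l).map Prod.fst = l := map_fst_zip (by simp)
  exact congrArg Prod.snd (inj_on_of_nodup_map (hfst ▸ hl) hf hg rfl)

theorem List.Nodup.append_swap_ne_rotate {Q₁ Q₂ Q₃ Q₄ : List α}
    (hnd : (Q₁ ++ Q₂ ++ Q₃ ++ Q₄).Nodup) (h₁ : Q₁ ≠ []) (h₂ : Q₂ ≠ []) (h₄ : Q₄ ≠ []) (k : ℕ) :
    Q₁ ++ Q₄ ++ Q₃ ++ Q₂ ≠ (Q₁ ++ Q₂ ++ Q₃ ++ Q₄).rotate k := by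
  obtain ⟨Q₁, e, rfl⟩ := (eq_nil_or_concat' Q₁).resolve_left h₁
  obtain ⟨f, Q₂, rfl⟩ := exists_cons_of_ne_nil h₂
  obtain ⟨g, Q₄, rfl⟩ := exists_cons_of_ne_nil h₄
  intro heq
  have hfg : f ≠ g := by
    simp only [nodup_append, append_assoc] at hnd
    grind
  have hf : (e, f) ∈ cyclicPairs (Q₁ ++ [e] ++ f :: Q₂ ++ Q₃ ++ g :: Q₄) := by
    simpa using mem_cyclicPairs_append_cons_cons Q₁ (Q₂ ++ Q₃ ++ g :: Q₄) e f
  have hg : (e, g) ∈ cyclicPairs (Q₁ ++ [e] ++ f :: Q₂ ++ Q₃ ++ g :: Q₄) := by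
    rw [← mem_rotate (n := k), ← cyclicPairs_rotate, ← heq]
    simpa using mem_cyclicPairs_append_cons_cons Q₁ (Q₄ ++ Q₃ ++ f :: Q₂) e g
  exact hfg (hnd.eq_of_mem_cyclicPairs hf hg)

end CyclicPairs

section Occurrences

variable {α : Type*} [DecidableEq α] {v : α} {c : List α}

theorem List.exists_rotate_eq_cons_of_count_pos (h : 0 < c.count v) :
    ∃ k l, c.rotate k = v :: l ∧ l.count v + 1 = c.count v := by
  obtain ⟨s, t, rfl⟩ := append_of_mem (count_pos_iff.1 h)
  refine ⟨s.length, t ++ s, rotate_append_length_eq s (v :: t), ?_⟩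
  simp only [count_append, count_cons_self]
  omega

theorem List.exists_rotate_eq_of_three_le_count (h : 3 ≤ c.count v) :
    ∃ k A B D, c.rotate k = v :: A ++ v :: B ++ v :: D := by
  obtain ⟨k, l, hk, hl⟩ := exists_rotate_eq_cons_of_count_pos (by omega : 0 < c.count v)
  obtain ⟨A, R, rfl, hA⟩ := eq_append_cons_of_mem (count_pos_iff.1 (by omega) : v ∈ l)
  simp only [count_append, count_eq_zero.2 hA, count_cons_self] at hl
  obtain ⟨B, D, rfl⟩ := append_of_mem (count_pos_iff.1 (by omega) : v ∈ R)
  exact ⟨k, A, B, D, by simp [hk]⟩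

theorem List.exists_rotate_eq_of_count_eq_two (h : c.count v = 2) :
    ∃ k A B, c.rotate k = v :: A ++ v :: B ∧ v ∉ A ∧ v ∉ B := by
  obtain ⟨k, l, hk, hl⟩ := exists_rotate_eq_cons_of_count_pos (by omega : 0 < c.count v)
  obtain ⟨A, B, rfl, hA⟩ := eq_append_cons_of_mem (count_pos_iff.1 (by omega) : v ∈ l)
  simp only [count_append, count_eq_zero.2 hA, count_cons_self] at hl
  exact ⟨k, A, B, by simp [hk], hA, count_eq_zero.1 (by omega)⟩

end Occurrences

namespace IsEulerianCircuit

variable {V : Type*} {E : V → V → Prop} {c c' : List V}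

theorem rotate (hc : IsEulerianCircuit E c) (k : ℕ) : IsEulerianCircuit E (c.rotate k) := by
  obtain ⟨hne, hnd, hmem⟩ := hc
  refine ⟨by simpa using hne, ?_, fun p => ?_⟩
  · rw [cyclicPairs_rotate]
    exact nodup_rotate.mpr hnd
  · rw [cyclicPairs_rotate, mem_rotate]
    exact hmem p

theorem of_perm (hc : IsEulerianCircuit E c) (hne : c' ≠ [])
    (hp : cyclicPairs c' ~ cyclicPairs c) : IsEulerianCircuit E c' :=
  ⟨hne, hp.nodup_iff.mpr hc.2.1, fun p => hp.mem_iff.trans (hc.2.2 p)⟩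

theorem count_eq_outdeg [DecidableEq V] (hc : IsEulerianCircuit E c) (v : V) :
    c.count v = outdeg E v := by
  have hfst : (cyclicPairs c).map Prod.fst = c := map_fst_zip (by simp)
  have hout : Prod.mk v '' {w | E v w} = ((cyclicPairs c).filter (·.1 = v)).toFinset := by
    ext ⟨x, w⟩
    simp +contextual [hc.2.2, eq_comm (a := v)]
  rw [outdeg, ← Set.ncard_image_of_injective _ (Prod.mk_right_injective v), hout,
    Set.ncard_coe_finset, toFinset_card_of_nodup (hc.2.1.filter _), ← countP_eq_length_filter]
  conv_lhs => rw [← hfst, count, countP_map]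
  rfl

theorem swap_segments (hc : IsEulerianCircuit E c) (hne : c' ≠ []) {Q₁ Q₂ Q₃ Q₄ : List (V × V)}
    (h₁ : Q₁ ≠ []) (h₂ : Q₂ ≠ []) (h₄ : Q₄ ≠ []) (hQ : cyclicPairs c = Q₁ ++ Q₂ ++ Q₃ ++ Q₄)
    (hQ' : cyclicPairs c' = Q₁ ++ Q₄ ++ Q₃ ++ Q₂) :
    IsEulerianCircuit E c' ∧ ∀ k, c' ≠ c.rotate k := by
  refine ⟨hc.of_perm hne ?_, fun k heq => ?_⟩
  · classical
    rw [hQ, hQ']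
    exact perm_iff_count.2 fun a => by simp only [count_append]; omega
  · refine (hQ ▸ hc.2.1).append_swap_ne_rotate h₁ h₂ h₄ k ?_
    rw [← hQ, ← hQ', ← cyclicPairs_rotate, heq]

theorem exists_ne_rotate_of_three_visits {v : V} {A B D : List V}
    (hc : IsEulerianCircuit E c) (h : c = v :: A ++ v :: B ++ v :: D) :
    ∃ c', IsEulerianCircuit E c' ∧ ∀ k, c' ≠ c.rotate k :=
  ⟨_, hc.swap_segments (c' := v :: A ++ v :: D ++ v :: B) (Q₃ := []) (by simp)
    (walkPairs_cons_append_singleton_ne_nil _ _ _) (walkPairs_cons_append_singleton_ne_nil _ _ _)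
    (walkPairs_cons_append_singleton_ne_nil _ _ _)
    (by rw [h, cyclicPairs_cons_append_cons_append_cons, append_nil])
    (by rw [cyclicPairs_cons_append_cons_append_cons, append_nil])⟩

theorem exists_ne_rotate_of_two_visits_of_mem {v u : V} {A B : List V}
    (hc : IsEulerianCircuit E c) (h : c = v :: A ++ v :: B) (hA : u ∈ A) (hB : u ∈ B) :
    ∃ c', IsEulerianCircuit E c' ∧ ∀ k, c' ≠ c.rotate k := by
  obtain ⟨A₁, A₂, rfl⟩ := append_of_mem hA
  obtain ⟨B₁, B₂, rfl⟩ := append_of_mem hB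
  exact ⟨_, hc.swap_segments (c' := v :: A₁ ++ u :: B₂ ++ v :: B₁ ++ u :: A₂) (by simp)
    (walkPairs_cons_append_singleton_ne_nil _ _ _) (walkPairs_cons_append_singleton_ne_nil _ _ _)
    (walkPairs_cons_append_singleton_ne_nil _ _ _)
    (by rw [h, ← cyclicPairs_cons_append_cons_append_cons_append_cons]; simp)
    (cyclicPairs_cons_append_cons_append_cons_append_cons ..)⟩

theorem exists_mem_mem_of_two_visits (hloop : ∀ x, ¬E x x) {v : V} {A B : List V}
    (hc : IsEulerianCircuit E c) (h : c = v :: A ++ v :: B) (hA : v ∉ A) (hB : v ∉ B)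
    (hconn : (delNode E v).Connected) : ∃ w, w ∈ A ∧ w ∈ B := by
  have hmem : ∀ x y, E x y ↔ (x, y) ∈ walkPairs (v :: A ++ [v]) ++ walkPairs (v :: B ++ [v]) :=
    fun x y => by rw [← cyclicPairs_cons_append_cons, ← h, hc.2.2 (x, y)]
  obtain ⟨a, haA⟩ := exists_mem_of_ne_nil A <| by
    rintro rfl
    exact hloop v ((hmem v v).2 (by simp [walkPairs]))
  obtain ⟨b, hbB⟩ := exists_mem_of_ne_nil B <| by
    rintro rfl
    exact hloop v ((hmem v v).2 (by simp [walkPairs]))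
  have hedge : ∀ x y, E x y → x ≠ v → y ≠ v → (x ∈ A ∧ y ∈ A) ∨ (x ∈ B ∧ y ∈ B) := by
    intro x y hxy hx hy
    rcases mem_append.1 ((hmem x y).1 hxy) with hxy | hxy <;>
      have := mem_of_mem_walkPairs hxy <;> simp_all
  -- If `A` and `B` were disjoint, no edge of `delNode E v` could leave the vertices of `A`.
  by_contra! hdisj
  obtain ⟨p⟩ := hconn.preconnected ⟨a, ne_of_mem_of_not_mem haA hA⟩ ⟨b, ne_of_mem_of_not_mem hbB hB⟩
  obtain ⟨d, -, hd₁, hd₂⟩ := p.exists_boundary_dart {x | x.1 ∈ A} haA (hdisj b · hbB)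
  rcases d.adj.2 with hd | hd
  · rcases hedge _ _ hd d.fst.2 d.snd.2 with ⟨-, h⟩ | ⟨h, -⟩
    exacts [hd₂ h, hdisj _ hd₁ h]
  · rcases hedge _ _ hd d.snd.2 d.fst.2 with ⟨h, -⟩ | ⟨-, h⟩
    exacts [hd₂ h, hdisj _ hd₁ h]

end IsEulerianCircuit

theorem not_A_implies_two_circuits_general {V : Type*} (E : V → V → Prop)
    (hloop : ∀ x : V, ¬ E x x)
    (heul : ∃ c : List V, IsEulerianCircuit E c)
    (h : ∃ v : V, 3 ≤ outdeg E v ∨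
        (outdeg E v = 2 ∧ ¬ IsCutNode (underlyingUG E) v)) :
    ∃ c c' : List V, IsEulerianCircuit E c ∧ IsEulerianCircuit E c' ∧
      ∀ k : ℕ, c' ≠ c.rotate k := by
  classical
  obtain ⟨c, hc⟩ := heul
  obtain ⟨v, hv⟩ := h
  have hcount := hc.count_eq_outdeg v
  rcases hv with h3 | ⟨h2, hcut⟩
  · obtain ⟨k, A, B, D, hk⟩ := exists_rotate_eq_of_three_le_count (hcount ▸ h3)
    obtain ⟨c', hc', hne⟩ := (hc.rotate k).exists_ne_rotate_of_three_visits hk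
    exact ⟨_, c', hc.rotate k, hc', hne⟩
  · obtain ⟨k, A, B, hk, hA, hB⟩ := exists_rotate_eq_of_count_eq_two (hcount.trans h2)
    obtain ⟨w, hwA, hwB⟩ :=
      (hc.rotate k).exists_mem_mem_of_two_visits hloop hk hA hB (not_not.1 hcut)
    obtain ⟨c', hc', hne⟩ := (hc.rotate k).exists_ne_rotate_of_two_visits_of_mem hk hwA hwB
    exact ⟨_, c', hc.rotate k, hc', hne⟩

/-- If some node has degree at least `3`, or degree `2` and is not a cut node of `U(G)`,
then `G` has at least two Eulerian circuits that are not rotations of each other. -/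
theorem not_A_implies_two_circuits {V : Type*} [Fintype V] (E : V → V → Prop)
    (hloop : ∀ x : V, ¬ E x x) (hconn : (underlyingUG E).Connected)
    (heul : ∃ c : List V, IsEulerianCircuit E c)
    (h : ∃ v : V, 3 ≤ outdeg E v ∨
        (outdeg E v = 2 ∧ ¬ IsCutNode (underlyingUG E) v)) :
    ∃ c c' : List V, IsEulerianCircuit E c ∧ IsEulerianCircuit E c' ∧
      ∀ k : ℕ, c' ≠ c.rotate k :=
  not_A_implies_two_circuits_general E hloop heul h
end

section
/- Let G = (V,E) be a directed Eulerian graph without parallel edges or self-loops. Any two distinct maximal safe walks for Eulerian circuits of G are edge-disjoint, and the sum of the lengths (number of edges) of all maximal safe walks of G equals |E|. -/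
/-- A safe walk: a walk with at least one edge appearing in every Eulerian circuit. -/
def IsSafe {V : Type*} (E : V → V → Prop) (W : List V) : Prop :=
  2 ≤ W.length ∧ ∀ c, IsEulerianCircuit E c → Appears W c

/-- `q` is a subwalk of the (linear) walk `w`: its edge sequence is an infix. -/
def SubwalkOf {V : Type*} (q w : List V) : Prop :=
  (q.zip q.tail) <:+: (w.zip w.tail)

/-- A maximal safe walk: a safe walk not a proper subwalk of another safe walk. -/
def IsMaxSafe {V : Type*} (E : V → V → Prop) (W : List V) : Prop :=
  IsSafe E W ∧ ∀ W', IsSafe E W' → SubwalkOf W W' → W.length = W'.length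


/-!
Fix an edge `x`. Reading an Eulerian circuit `c` cyclically from just after `x` gives a list
`R c` of the remaining edges, and a walk whose edge list is `A₁ ++ x :: A₂` appears in `c` exactly
when `A₁` is a suffix and `A₂` a prefix of `R c` that do not overlap. Hence two maximal safe walks
through `x` can be merged into `S ++ x :: P`, with `P` the longer of the two prefixes and `S` the
longer of the two suffixes. If this fits into the circuit, it is safe, and by maximality both walks
equal it. Otherwise `P` and `S` together determine `R c`, so the Eulerian circuit is unique up to
rotation and every maximal safe walk runs through all edges. Choosing one maximal safe walk per
edge set then partitions the edges.
-/

open List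

section CyclicInfix

variable {α : Type*} {A l : List α}

def IsCyclicInfix (A l : List α) : Prop := ∃ k, A <:+: l.rotate k

theorem IsCyclicInfix.length_le (h : IsCyclicInfix A l) : A.length ≤ l.length := by
  obtain ⟨k, hk⟩ := h
  simpa using hk.length_le

theorem IsCyclicInfix.mem (h : IsCyclicInfix A l) {x : α} (hx : x ∈ A) : x ∈ l := by
  obtain ⟨k, hk⟩ := h
  exact mem_rotate.mp (hk.subset hx)

theorem IsCyclicInfix.nodup (h : IsCyclicInfix A l) (hl : l.Nodup) : A.Nodup := by
  obtain ⟨k, hk⟩ := h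
  exact hk.sublist.nodup (nodup_rotate.mpr hl)

theorem IsCyclicInfix.isRotated_of_length_eq (h : IsCyclicInfix A l) (hlen : A.length = l.length) :
    A ~r l := by
  obtain ⟨k, hk⟩ := h
  rw [hk.eq_of_length (by simpa using hlen)]
  exact IsRotated.symm ⟨k, rfl⟩

theorem append_cons_isInfix_append_cons {A₁ A₂ S P : List α} (x : α) (h₁ : A₁ <:+ S)
    (h₂ : A₂ <+: P) : A₁ ++ x :: A₂ <:+: S ++ x :: P := by
  obtain ⟨s, rfl⟩ := h₁
  obtain ⟨p, rfl⟩ := h₂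
  exact ⟨s, p, by simp⟩

theorem eq_of_isPrefix_of_isSuffix {P S R R' : List α} (hP : P <+: R) (hS : S <:+ R)
    (hP' : P <+: R') (hS' : S <:+ R') (hlen : R.length = R'.length)
    (hcover : R.length ≤ P.length + S.length) : R = R' := by
  obtain ⟨u, rfl⟩ := hP
  obtain ⟨u', rfl⟩ := hP'
  have hu : u <:+ S := suffix_of_suffix_length_le (suffix_append P u) hS (by simp at hcover; omega)
  have hu' : u' <:+ S :=
    suffix_of_suffix_length_le (suffix_append P u') hS' (by simp at hlen hcover; omega)
  simp only [length_append, Nat.add_left_cancel_iff] at hlen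
  rw [(suffix_of_suffix_length_le hu hu' hlen.le).eq_of_length hlen]

variable [DecidableEq α]

/-- The cyclic list `l` read from just after `x` round to just before `x`. -/
def cycleAfter (l : List α) (x : α) : List α := (l.rotate (l.idxOf x)).tail

theorem rotate_idxOf_eq_cons {x : α} (hx : x ∈ l) :
    l.rotate (l.idxOf x) = x :: cycleAfter l x := by
  have hlt : l.idxOf x < l.length := idxOf_lt_length_iff.mpr hx
  have hhead : (l.rotate (l.idxOf x))[0]'(by simp; omega) = x := by
    simp [getElem_rotate, Nat.mod_eq_of_lt hlt]
  cases hr : l.rotate (l.idxOf x) with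
  | nil => simp at hr; simp [hr] at hx
  | cons y r => simp_all [cycleAfter]

theorem length_cycleAfter {x : α} (hx : x ∈ l) : (cycleAfter l x).length = l.length - 1 := by
  have h := congrArg length (rotate_idxOf_eq_cons hx)
  simp only [length_rotate, length_cons] at h
  omega

theorem List.Nodup.eq_cycleAfter_of_rotate_eq_cons (hl : l.Nodup) {x : α} {k : ℕ} {R : List α}
    (h : l.rotate k = x :: R) : R = cycleAfter l x := by
  have hx : x ∈ l := mem_rotate.mp (h ▸ mem_cons_self)
  have hpos : 0 < l.length := length_pos_of_mem hx
  have hk : k % l.length = l.idxOf x := by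
    have hhead : (l.rotate k)[0]'(by simpa using hpos) = x := by simp [h]
    rw [getElem_rotate, zero_add] at hhead
    exact (hl.getElem_inj_iff).mp (hhead.trans (getElem_idxOf (idxOf_lt_length_iff.mpr hx)).symm)
  rw [← rotate_mod, hk, rotate_idxOf_eq_cons hx] at h
  exact (cons.inj h).2.symm

theorem isCyclicInfix_append_cons_iff (hl : l.Nodup) {x : α} (hx : x ∈ l) {A₁ A₂ : List α} :
    IsCyclicInfix (A₁ ++ x :: A₂) l ↔ A₁ <:+ cycleAfter l x ∧ A₂ <+: cycleAfter l x ∧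
      A₁.length + A₂.length ≤ (cycleAfter l x).length := by
  constructor
  · rintro ⟨k, s, t, hst⟩
    have hrot : l.rotate (k + (s ++ A₁).length) = x :: (A₂ ++ t ++ s ++ A₁) := by
      rw [← rotate_rotate, ← hst]
      simpa using rotate_append_length_eq (s ++ A₁) (x :: (A₂ ++ t))
    rw [← hl.eq_cycleAfter_of_rotate_eq_cons hrot]
    exact ⟨⟨A₂ ++ t ++ s, by simp⟩, ⟨t ++ s ++ A₁, by simp⟩, by simp; omega⟩
  · rintro ⟨hA₁, ⟨u, hu⟩, hlen⟩
    obtain ⟨m, rfl⟩ : A₁ <:+ u :=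
      suffix_of_suffix_length_le hA₁ (hu ▸ suffix_append A₂ u) (by simp [← hu] at hlen ⊢; omega)
    refine ⟨l.idxOf x + (x :: A₂ ++ m).length, ?_⟩
    rw [← rotate_rotate, rotate_idxOf_eq_cons hx, ← hu,
      show x :: (A₂ ++ (m ++ A₁)) = (x :: A₂ ++ m) ++ A₁ by simp, rotate_append_length_eq]
    exact ⟨[], m, by simp⟩

end CyclicInfix

section Walks

variable {V : Type*}

theorem length_zip_tail (W : List V) : (W.zip W.tail).length = W.length - 1 := by
  simp

theorem isChain_zip_tail : ∀ W : List V, (W.zip W.tail).IsChain (fun p q => p.2 = q.1)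
  | [] | [_] | [_, _] => by simp
  | a :: b :: c :: t => isChain_cons_cons.mpr ⟨rfl, isChain_zip_tail (b :: c :: t)⟩

theorem zip_tail_cons_map_snd :
    ∀ (p : V × V) (A : List (V × V)), (p :: A).IsChain (fun p q => p.2 = q.1) →
      (p.1 :: (p :: A).map Prod.snd).zip ((p :: A).map Prod.snd) = p :: A
  | p, [], _ => by simp
  | p, q :: A, h => by
    obtain ⟨hpq, hq⟩ := isChain_cons_cons.mp h
    have ih := zip_tail_cons_map_snd q A hq
    rw [← hpq] at ih
    simp only [map_cons, zip_cons_cons] at ih ⊢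
    rw [ih]

theorem exists_zip_tail_eq {A : List (V × V)} (hA : A ≠ [])
    (hchain : A.IsChain (fun p q => p.2 = q.1)) : ∃ W : List V, W.zip W.tail = A := by
  obtain ⟨p, A, rfl⟩ := exists_cons_of_ne_nil hA
  exact ⟨p.1 :: (p :: A).map Prod.snd, zip_tail_cons_map_snd p A hchain⟩

theorem cyclicPairs_rotate_s11 (c : List V) (k : ℕ) :
    cyclicPairs (c.rotate k) = (cyclicPairs c).rotate k := by
  rw [cyclicPairs, cyclicPairs, zip_eq_zipWith, zip_eq_zipWith,
    zipWith_rotate_distrib _ _ _ _ (by simp), rotate_rotate, rotate_rotate, Nat.add_comm]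

theorem cyclicPairs_cons_s11 (a : V) (t : List V) :
    cyclicPairs (a :: t) = (a :: t ++ [a]).zip (a :: t ++ [a]).tail := by
  rw [cyclicPairs, rotate_cons_succ, rotate_zero, tail_append_of_ne_nil (cons_ne_nil a t),
    tail_cons, ← append_nil (t ++ [a]), zip_append (by simp)]
  simp

theorem isChain_cyclicPairs : ∀ c : List V, (cyclicPairs c).IsChain (fun p q => p.2 = q.1)
  | [] => by simp [cyclicPairs]
  | a :: t => cyclicPairs_cons_s11 a t ▸ isChain_zip_tail _

theorem appears_iff_isCyclicInfix {q c : List V} :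
    Appears q c ↔ IsCyclicInfix (q.zip q.tail) (cyclicPairs c) := by
  simp only [Appears, IsCyclicInfix, cyclicPairs_rotate_s11]

end Walks

section SafeWalks

variable {V : Type*} {E : V → V → Prop} {c c₀ W W' : List V}

theorem IsEulerianCircuit.length_cyclicPairs_eq [DecidableEq V] (hc : IsEulerianCircuit E c)
    (hc' : IsEulerianCircuit E c') : (cyclicPairs c).length = (cyclicPairs c').length := by
  have h : (cyclicPairs c).toFinset = (cyclicPairs c').toFinset := by
    ext p
    simp only [mem_toFinset, hc.2.2, hc'.2.2]
  rw [← toFinset_card_of_nodup hc.2.1, ← toFinset_card_of_nodup hc'.2.1, h]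

theorem isSafe_iff : IsSafe E W ↔ 2 ≤ W.length ∧
    ∀ c, IsEulerianCircuit E c → IsCyclicInfix (W.zip W.tail) (cyclicPairs c) := by
  simp only [IsSafe, appears_iff_isCyclicInfix]

theorem IsSafe.isCyclicInfix (hW : IsSafe E W) (hc : IsEulerianCircuit E c) :
    IsCyclicInfix (W.zip W.tail) (cyclicPairs c) :=
  (isSafe_iff.mp hW).2 c hc

theorem IsSafe.length_le (hW : IsSafe E W) (hc : IsEulerianCircuit E c) :
    W.length ≤ (cyclicPairs c).length + 1 := by
  have := (hW.isCyclicInfix hc).length_le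
  rw [length_zip_tail] at this
  omega

theorem isSafe_pair {u v : V} (huv : E u v) : IsSafe E [u, v] :=
  isSafe_iff.mpr ⟨le_rfl, fun c hc => ⟨0, by simpa [singleton_infix_iff, hc.2.2] using huv⟩⟩

theorem IsSafe.exists_isMaxSafe (hc₀ : IsEulerianCircuit E c₀) (hW : IsSafe E W) :
    ∃ W', IsMaxSafe E W' ∧ SubwalkOf W W' := by
  suffices ∀ k W, IsSafe E W → (cyclicPairs c₀).length + 1 - W.length ≤ k →
      ∃ W', IsMaxSafe E W' ∧ SubwalkOf W W' from this _ W hW le_rfl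
  intro k
  induction k with
  | zero =>
    intro W hW hk
    refine ⟨W, ⟨hW, fun W' hW' hWW' => ?_⟩, infix_refl _⟩
    have := hWW'.length_le
    simp only [length_zip_tail] at this
    have := hW'.length_le hc₀
    have := hW.1
    omega
  | succ k ih =>
    intro W hW hk
    by_cases hmax : IsMaxSafe E W
    · exact ⟨W, hmax, infix_refl _⟩
    obtain ⟨W', hW', hWW', hlen⟩ : ∃ W', IsSafe E W' ∧ SubwalkOf W W' ∧ W.length ≠ W'.length := by
      simpa [IsMaxSafe, hW] using hmax
    have := hWW'.length_le
    simp only [length_zip_tail] at this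
    obtain ⟨W'', hW'', hW'W''⟩ := ih W' hW' (by have := hW.1; omega)
    exact ⟨W'', hW'', hWW'.trans hW'W''⟩

theorem exists_isMaxSafe_mem (hc₀ : IsEulerianCircuit E c₀) {u v : V} (huv : E u v) :
    ∃ W, IsMaxSafe E W ∧ (u, v) ∈ W.zip W.tail := by
  obtain ⟨W, hW, hsub⟩ := (isSafe_pair huv).exists_isMaxSafe hc₀
  exact ⟨W, hW, hsub.subset (by simp)⟩

theorem IsMaxSafe.zip_tail_eq_of_isInfix (hc₀ : IsEulerianCircuit E c₀) (hW : IsMaxSafe E W)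
    {M : List (V × V)} (hM : ∀ c, IsEulerianCircuit E c → IsCyclicInfix M (cyclicPairs c))
    (hWM : W.zip W.tail <:+: M) : W.zip W.tail = M := by
  have hlenW : 1 ≤ (W.zip W.tail).length := by rw [length_zip_tail]; have := hW.1.1; omega
  have hlenM := hWM.length_le
  obtain ⟨k, hk⟩ := hM c₀ hc₀
  have hchain : M.IsChain (fun p q => p.2 = q.1) :=
    (cyclicPairs_rotate_s11 c₀ k ▸ isChain_cyclicPairs (c₀.rotate k)).infix hk
  obtain ⟨W', hW'⟩ := exists_zip_tail_eq (ne_nil_of_length_pos (by omega)) hchain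
  have hsafe : IsSafe E W' := by
    refine isSafe_iff.mpr ⟨?_, hW' ▸ hM⟩
    have := length_zip_tail W'
    rw [hW'] at this
    omega
  have hlen := hW.2 W' hsafe (by rw [SubwalkOf, hW']; exact hWM)
  exact hWM.eq_of_length (by rw [length_zip_tail, hlen, ← length_zip_tail, hW'])

end SafeWalks

section Rigidity

variable {V : Type*} [DecidableEq V] {E : V → V → Prop} {c c₀ W W' : List V}
  {x : V × V} {A₁ A₂ : List (V × V)}

theorem IsSafe.isSuffix_isPrefix_cycleAfter (hW : IsSafe E W) (hA : W.zip W.tail = A₁ ++ x :: A₂)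
    (hc : IsEulerianCircuit E c) :
    A₁ <:+ cycleAfter (cyclicPairs c) x ∧ A₂ <+: cycleAfter (cyclicPairs c) x ∧
      A₁.length + A₂.length ≤ (cycleAfter (cyclicPairs c) x).length := by
  have h := hW.isCyclicInfix hc
  rw [hA] at h
  exact (isCyclicInfix_append_cons_iff hc.2.1 (h.mem (by simp))).mp h

theorem IsMaxSafe.isRotated_of_cycleAfter_eq (hc₀ : IsEulerianCircuit E c₀) (hW : IsMaxSafe E W)
    (hA : W.zip W.tail = A₁ ++ x :: A₂)
    (hR : ∀ c, IsEulerianCircuit E c →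
      cycleAfter (cyclicPairs c) x = cycleAfter (cyclicPairs c₀) x) :
    W.zip W.tail ~r cyclicPairs c₀ := by
  obtain ⟨hA₁, hA₂, hlen⟩ := hW.1.isSuffix_isPrefix_cycleAfter hA hc₀
  set R := cycleAfter (cyclicPairs c₀) x
  have hx : ∀ c, IsEulerianCircuit E c → x ∈ cyclicPairs c := fun c hc =>
    (hW.1.isCyclicInfix hc).mem (by simp [hA])
  set M := A₁ ++ x :: R.take (R.length - A₁.length)
  have hM : ∀ c, IsEulerianCircuit E c → IsCyclicInfix M (cyclicPairs c) := fun c hc => by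
    rw [isCyclicInfix_append_cons_iff hc.2.1 (hx c hc), hR c hc]
    exact ⟨hA₁, take_prefix _ _, by rw [length_take]; omega⟩
  have hWM : W.zip W.tail = M := hW.zip_tail_eq_of_isInfix hc₀ hM
    (hA ▸ append_cons_isInfix_append_cons x suffix_rfl (prefix_take_iff.mpr ⟨hA₂, by omega⟩))
  rw [hWM]
  refine (hM c₀ hc₀).isRotated_of_length_eq ?_
  have : R.length = (cyclicPairs c₀).length - 1 := length_cycleAfter (hx c₀ hc₀)
  have := length_pos_of_mem (hx c₀ hc₀)
  simp only [M, length_append, length_cons, length_take]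
  omega

theorem IsMaxSafe.toFinset_zip_tail_eq (hc₀ : IsEulerianCircuit E c₀) (hW : IsMaxSafe E W)
    (hW' : IsMaxSafe E W') (hx : x ∈ W.zip W.tail) (hx' : x ∈ W'.zip W'.tail) :
    (W.zip W.tail).toFinset = (W'.zip W'.tail).toFinset := by
  obtain ⟨A₁, A₂, hA⟩ := append_of_mem hx
  obtain ⟨B₁, B₂, hB⟩ := append_of_mem hx'
  set R := fun c => cycleAfter (cyclicPairs c) x
  have hAR := fun c (hc : IsEulerianCircuit E c) => hW.1.isSuffix_isPrefix_cycleAfter hA hc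
  have hBR := fun c (hc : IsEulerianCircuit E c) => hW'.1.isSuffix_isPrefix_cycleAfter hB hc
  obtain ⟨P, hAP, hBP, hPR⟩ : ∃ P, A₂ <+: P ∧ B₂ <+: P ∧
      ∀ c, IsEulerianCircuit E c → P <+: R c := by
    rcases le_total A₂.length B₂.length with h | h
    · exact ⟨B₂, prefix_of_prefix_length_le (hAR c₀ hc₀).2.1 (hBR c₀ hc₀).2.1 h, prefix_rfl,
        fun c hc => (hBR c hc).2.1⟩
    · exact ⟨A₂, prefix_rfl, prefix_of_prefix_length_le (hBR c₀ hc₀).2.1 (hAR c₀ hc₀).2.1 h,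
        fun c hc => (hAR c hc).2.1⟩
  obtain ⟨S, hAS, hBS, hSR⟩ : ∃ S, A₁ <:+ S ∧ B₁ <:+ S ∧
      ∀ c, IsEulerianCircuit E c → S <:+ R c := by
    rcases le_total A₁.length B₁.length with h | h
    · exact ⟨B₁, suffix_of_suffix_length_le (hAR c₀ hc₀).1 (hBR c₀ hc₀).1 h, suffix_rfl,
        fun c hc => (hBR c hc).1⟩
    · exact ⟨A₁, suffix_rfl, suffix_of_suffix_length_le (hBR c₀ hc₀).1 (hAR c₀ hc₀).1 h,
        fun c hc => (hAR c hc).1⟩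
  have hlenR : ∀ c, IsEulerianCircuit E c → (R c).length = (R c₀).length := fun c hc => by
    have hxc := (hW.1.isCyclicInfix hc).mem hx
    have hxc₀ := (hW.1.isCyclicInfix hc₀).mem hx
    simp only [R, length_cycleAfter hxc, length_cycleAfter hxc₀, hc.length_cyclicPairs_eq hc₀]
  by_cases hfit : S.length + P.length ≤ (R c₀).length
  · have hM : ∀ c, IsEulerianCircuit E c → IsCyclicInfix (S ++ x :: P) (cyclicPairs c) :=
      fun c hc => (isCyclicInfix_append_cons_iff hc.2.1 ((hW.1.isCyclicInfix hc).mem hx)).mpr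
        ⟨hSR c hc, hPR c hc, hlenR c hc ▸ hfit⟩
    rw [hW.zip_tail_eq_of_isInfix hc₀ hM (hA ▸ append_cons_isInfix_append_cons x hAS hAP),
      hW'.zip_tail_eq_of_isInfix hc₀ hM (hB ▸ append_cons_isInfix_append_cons x hBS hBP)]
  · have hRc : ∀ c, IsEulerianCircuit E c → R c = R c₀ := fun c hc =>
      eq_of_isPrefix_of_isSuffix (hPR c hc) (hSR c hc) (hPR c₀ hc₀) (hSR c₀ hc₀) (hlenR c hc)
        (by rw [hlenR c hc]; omega)
    rw [toFinset_eq_of_perm _ _ (hW.isRotated_of_cycleAfter_eq hc₀ hA hRc).perm,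
      toFinset_eq_of_perm _ _ (hW'.isRotated_of_cycleAfter_eq hc₀ hB hRc).perm]

end Rigidity

theorem exists_finset_representatives_partition {α β : Type*} [DecidableEq α] (P : β → Prop)
    (f : β → List α) (U : Finset α)
    (hshare : ∀ b b', P b → P b' → ∀ a ∈ f b, a ∈ f b' → (f b).toFinset = (f b').toFinset)
    (hcover : ∀ a ∈ U, ∃ b, P b ∧ a ∈ f b) (hnodup : ∀ b, P b → (f b).Nodup)
    (hsub : ∀ b, P b → ∀ a ∈ f b, a ∈ U) :
    ∃ S : Finset β, (∀ b ∈ S, P b) ∧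
      (∀ b, P b → ∃ b' ∈ S, (f b).toFinset = (f b').toFinset) ∧
      (∀ b ∈ S, ∀ b' ∈ S, b ≠ b' → ∀ a ∈ f b, a ∉ f b') ∧
      ∑ b ∈ S, (f b).length = U.card := by
  classical
  set T := U.powerset.filter fun F => ∃ b, P b ∧ (f b).toFinset = F
  have hmemT : ∀ b, P b → (f b).toFinset ∈ T := fun b hb =>
    Finset.mem_filter.mpr ⟨Finset.mem_powerset.mpr fun a ha => hsub b hb a (mem_toFinset.mp ha),
      b, hb, rfl⟩
  choose r hrP hrF using fun F (hF : F ∈ T) => (Finset.mem_filter.mp hF).2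
  have hTshare : ∀ F (hF : F ∈ T) F' (hF' : F' ∈ T) a, a ∈ F → a ∈ F' → F = F' := by
    intro F hF F' hF' a ha ha'
    rw [← hrF F hF, mem_toFinset] at ha
    rw [← hrF F' hF', mem_toFinset] at ha'
    rw [← hrF F hF, ← hrF F' hF', hshare _ _ (hrP F hF) (hrP F' hF') a ha ha']
  have hrinj : ∀ F (hF : F ∈ T) F' (hF' : F' ∈ T), r F hF = r F' hF' → F = F' :=
    fun F hF F' hF' h => by rw [← hrF F hF, ← hrF F' hF', h]
  set S := T.attach.image fun F => r F.1 F.2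
  have hS : ∀ b ∈ S, ∃ F, ∃ hF : F ∈ T, r F hF = b := by
    simp [S]
  refine ⟨S, fun b hb => ?_, fun b hb => ?_, fun b hb b' hb' hne a ha ha' => ?_, ?_⟩
  · obtain ⟨F, hF, rfl⟩ := hS b hb
    exact hrP F hF
  · refine ⟨r _ (hmemT b hb), Finset.mem_image_of_mem _ (Finset.mem_attach _ ⟨_, hmemT b hb⟩), ?_⟩
    rw [hrF]
  · obtain ⟨F, hF, rfl⟩ := hS b hb
    obtain ⟨F', hF', rfl⟩ := hS b' hb'
    obtain rfl := hTshare F hF F' hF' a (hrF F hF ▸ mem_toFinset.mpr ha)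
      (hrF F' hF' ▸ mem_toFinset.mpr ha')
    exact hne rfl
  · have hunion : T.biUnion id = U := by
      ext a
      simp only [Finset.mem_biUnion, id]
      refine ⟨fun ⟨F, hF, ha⟩ => Finset.mem_powerset.mp (Finset.mem_filter.mp hF).1 ha,
        fun ha => ?_⟩
      obtain ⟨b, hb, hab⟩ := hcover a ha
      exact ⟨_, hmemT b hb, mem_toFinset.mpr hab⟩
    have hpair : (T : Set (Finset α)).PairwiseDisjoint id := fun F hF F' hF' hne =>
      Finset.disjoint_left.mpr fun a ha ha' => hne (hTshare F hF F' hF' a ha ha')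
    rw [Finset.sum_image fun F _ F' _ h => Subtype.ext (hrinj _ F.2 _ F'.2 h), ← hunion,
      Finset.card_biUnion hpair, ← Finset.sum_attach T]
    refine Finset.sum_congr rfl fun F _ => ?_
    rw [← toFinset_card_of_nodup (hnodup _ (hrP F F.2)), hrF, id]

theorem maximal_safe_walks_partition_edges_general {V : Type*} [DecidableEq V]
    (E : V → V → Prop)
    (heul : ∃ c : List V, IsEulerianCircuit E c) :
    (∀ W W' : List V, IsMaxSafe E W → IsMaxSafe E W' →
      (W.zip W.tail).toFinset = (W'.zip W'.tail).toFinset ∨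
        ∀ e ∈ W.zip W.tail, e ∉ W'.zip W'.tail) ∧
    ∃ S : Finset (List V),
      (∀ W ∈ S, IsMaxSafe E W) ∧
      (∀ W : List V, IsMaxSafe E W →
        ∃ W' ∈ S, (W.zip W.tail).toFinset = (W'.zip W'.tail).toFinset) ∧
      (∀ W ∈ S, ∀ W' ∈ S, W ≠ W' → ∀ e ∈ W.zip W.tail, e ∉ W'.zip W'.tail) ∧
      (∑ W ∈ S, (W.length - 1)) = Set.ncard {p : V × V | E p.1 p.2} := by
  obtain ⟨c₀, hc₀⟩ := heul
  have hshare : ∀ W W', IsMaxSafe E W → IsMaxSafe E W' → ∀ e ∈ W.zip W.tail,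
      e ∈ W'.zip W'.tail → (W.zip W.tail).toFinset = (W'.zip W'.tail).toFinset :=
    fun W W' hW hW' e he he' => hW.toFinset_zip_tail_eq hc₀ hW' he he'
  refine ⟨fun W W' hW hW' => or_iff_not_imp_right.mpr fun h => ?_, ?_⟩
  · push Not at h
    obtain ⟨e, he, he'⟩ := h
    exact hshare W W' hW hW' e he he'
  obtain ⟨S, hSmax, hSrep, hSdisj, hSsum⟩ :=
    exists_finset_representatives_partition (IsMaxSafe E) (fun W => W.zip W.tail)
      (cyclicPairs c₀).toFinset hshare
      (fun e he => exists_isMaxSafe_mem hc₀ ((hc₀.2.2 e).mp (mem_toFinset.mp he)))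
      (fun W hW => (hW.1.isCyclicInfix hc₀).nodup hc₀.2.1)
      (fun W hW e he => mem_toFinset.mpr ((hW.1.isCyclicInfix hc₀).mem he))
  refine ⟨S, hSmax, hSrep, hSdisj, ?_⟩
  have hedges : {p : V × V | E p.1 p.2} = ((cyclicPairs c₀).toFinset : Set (V × V)) := by
    ext p
    simp [hc₀.2.2]
  simp only [← length_zip_tail, hSsum, hedges, Set.ncard_coe_finset]

/-- Distinct maximal safe walks are edge-disjoint (up to having the same edge set),
and the total number of edges of all maximal safe walks equals `|E|`. -/
theorem maximal_safe_walks_partition_edges {V : Type*} [Fintype V] [DecidableEq V]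
    (E : V → V → Prop)
    (hloop : ∀ x : V, ¬ E x x) (hconn : (underlyingUG E).Connected)
    (heul : ∃ c : List V, IsEulerianCircuit E c) :
    (∀ W W' : List V, IsMaxSafe E W → IsMaxSafe E W' →
      (W.zip W.tail).toFinset = (W'.zip W'.tail).toFinset ∨
        ∀ e ∈ W.zip W.tail, e ∉ W'.zip W'.tail) ∧
    ∃ S : Finset (List V),
      (∀ W ∈ S, IsMaxSafe E W) ∧
      (∀ W : List V, IsMaxSafe E W →
        ∃ W' ∈ S, (W.zip W.tail).toFinset = (W'.zip W'.tail).toFinset) ∧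
      (∀ W ∈ S, ∀ W' ∈ S, W ≠ W' → ∀ e ∈ W.zip W.tail, e ∉ W'.zip W'.tail) ∧
      (∑ W ∈ S, (W.length - 1)) = Set.ncard {p : V × V | E p.1 p.2} :=
  maximal_safe_walks_partition_edges_general E heul
end
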